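/- For each integer d ≥ 3, the quadratic forms Γ_{a,b} := Δ_{a+2,b} - 2Δ_{a+1,b+1} + Δ_{a,b+2} for 0 ≤ a < b ≤ d-3 (with the convention Δ_{a,b} = -Δ_{b,a}) are C(d-2,2) linearly independent quadratic forms in x_0,...,x_d, where Δ_{a,b} = x_a x_{b+1} - x_{a+1} x_b. -/

import Mathlib

open MvPolynomial

/-- `Δ_{a,b} = x_a x_{b+1} - x_{a+1} x_b`; note this formula automatically
satisfies the antisymmetry convention `Δ_{a,b} = -Δ_{b,a}`. -/
noncomputable def Delta (K : Type*) [CommRing K] (a b : ℕ) : MvPolynomial ℕ K :=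
  X a * X (b + 1) - X (a + 1) * X b

/-- `Γ_{a,b} = Δ_{a+2,b} - 2Δ_{a+1,b+1} + Δ_{a,b+2}`. -/
noncomputable def Gamma (K : Type*) [CommRing K] (a b : ℕ) : MvPolynomial ℕ K :=
  Delta K (a + 2) b - 2 • Delta K (a + 1) (b + 1) + Delta K a (b + 2)

/-
Substituting `x_i ↦ s^i + t^i` (with `s = X 0`, `t = X 1`) sends `Γ_{a,b}` to
`(t - s)^3 (s^a t^b - s^b t^a)`. For `a < b` the antisymmetrised monomials `s^a t^b - s^b t^a`
are linearly independent (the coefficient of `s^a t^b` singles out the pair `(a, b)`), and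
`(t - s)^3` is a nonzerodivisor, so the `Γ_{a,b}` are linearly independent as well.
-/

section

variable (R : Type*) [CommRing R]

noncomputable def antisymmMonomial (a b : ℕ) : MvPolynomial (Fin 2) R :=
  X 0 ^ a * X 1 ^ b - X 0 ^ b * X 1 ^ a

theorem coeff_X_zero_pow_mul_X_one_pow (a b c e : ℕ) :
    coeff (Finsupp.single 0 c + Finsupp.single 1 e) ((X 0 : MvPolynomial (Fin 2) R) ^ a * X 1 ^ b)
      = if a = c ∧ b = e then 1 else 0 := by
  rw [X_pow_eq_monomial, X_pow_eq_monomial, monomial_mul, coeff_monomial, one_mul]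
  congr 1
  simp only [Finsupp.ext_iff, Fin.forall_fin_two, Finsupp.add_apply, Finsupp.single_apply]
  simp

theorem coeff_antisymmMonomial {a b c e : ℕ} (hab : a < b) (hce : c < e) :
    coeff (Finsupp.single 0 c + Finsupp.single 1 e) (antisymmMonomial R a b)
      = if a = c ∧ b = e then 1 else 0 := by
  rw [antisymmMonomial, coeff_sub, coeff_X_zero_pow_mul_X_one_pow,
    coeff_X_zero_pow_mul_X_one_pow, if_neg (show ¬(b = c ∧ a = e) by omega), sub_zero]

theorem linearIndependent_antisymmMonomial :
    LinearIndependent R fun q : {ab : ℕ × ℕ // ab.1 < ab.2} => antisymmMonomial R q.1.1 q.1.2 := by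
  refine .of_pairwise_dual_eq_zero_one _
    (fun q => lcoeff R (Finsupp.single 0 q.1.1 + Finsupp.single 1 q.1.2)) ?_ ?_
  · intro p q hpq
    simp only [lcoeff_apply, coeff_antisymmMonomial R q.2 p.2]
    rw [if_neg]
    exact fun h => hpq.symm (Subtype.ext (Prod.ext h.1 h.2))
  · intro q
    simp [coeff_antisymmMonomial R q.2 q.2]

theorem aeval_X_zero_pow_add_X_one_pow_Gamma (a b : ℕ) :
    aeval (fun i => (X 0 : MvPolynomial (Fin 2) R) ^ i + X 1 ^ i) (Gamma R a b)
      = (X 1 - X 0) ^ 3 * antisymmMonomial R a b := by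
  simp only [Gamma, Delta, antisymmMonomial, two_smul, map_add, map_sub, map_mul, aeval_X]
  ring

theorem linearIndependent_Gamma [IsDomain R] :
    LinearIndependent R fun q : {ab : ℕ × ℕ // ab.1 < ab.2} => Gamma R q.1.1 q.1.2 := by
  set ψ := aeval (R := R) fun i => (X 0 : MvPolynomial (Fin 2) R) ^ i + X 1 ^ i
  have hX : (X 1 - X 0 : MvPolynomial (Fin 2) R) ^ 3 ≠ 0 :=
    pow_ne_zero _ (sub_ne_zero.mpr ((X_injective (R := R)).ne (by decide)))
  have hψ : ψ.toLinearMap ∘ (fun q : {ab : ℕ × ℕ // ab.1 < ab.2} => Gamma R q.1.1 q.1.2)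
      = LinearMap.mulLeft R ((X 1 - X 0) ^ 3) ∘
          fun q : {ab : ℕ × ℕ // ab.1 < ab.2} => antisymmMonomial R q.1.1 q.1.2 := by
    funext q
    exact aeval_X_zero_pow_add_X_one_pow_Gamma R q.1.1 q.1.2
  refine .of_comp ψ.toLinearMap ?_
  rw [hψ]
  exact (linearIndependent_antisymmMonomial R).map' _
    (LinearMap.ker_eq_bot.mpr (mul_right_injective₀ hX))

end

theorem card_subtype_lt_and_le_eq_choose (n : ℕ) :
    Nat.card {ab : ℕ × ℕ // ab.1 < ab.2 ∧ ab.2 ≤ n} = (n + 1).choose 2 := by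
  have e : {ab : ℕ × ℕ // ab.1 < ab.2 ∧ ab.2 ≤ n} ≃ Σ b : Fin (n + 1), Fin b :=
    { toFun := fun q => ⟨⟨q.1.2, by omega⟩, ⟨q.1.1, q.2.1⟩⟩
      invFun := fun p => ⟨(p.2, p.1), p.2.2, by omega⟩
      left_inv := fun _ => rfl
      right_inv := fun _ => rfl }
  rw [Nat.card_congr e, Nat.card_eq_fintype_card, Fintype.card_sigma]
  simp only [Fintype.card_fin]
  rw [Fin.sum_univ_eq_sum_range (fun i => i), Finset.sum_range_id, Nat.choose_two_right]

theorem gamma_linearIndependent_general (K : Type*) [Field K] (d : ℕ) (hd : 3 ≤ d) :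
    LinearIndependent K
      (fun q : {ab : ℕ × ℕ // ab.1 < ab.2 ∧ ab.2 ≤ d - 3} => Gamma K q.1.1 q.1.2) ∧
    Nat.card {ab : ℕ × ℕ // ab.1 < ab.2 ∧ ab.2 ≤ d - 3} = Nat.choose (d - 2) 2 := by
  refine ⟨?_, ?_⟩
  · have hι : Function.Injective fun q : {ab : ℕ × ℕ // ab.1 < ab.2 ∧ ab.2 ≤ d - 3} =>
        (⟨q.1, q.2.1⟩ : {ab : ℕ × ℕ // ab.1 < ab.2}) :=
      fun _ _ h => Subtype.ext (Subtype.mk.inj h)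
    exact ((linearIndependent_Gamma K).comp _ hι :)
  · rw [card_subtype_lt_and_le_eq_choose, show d - 3 + 1 = d - 2 by omega]

/-- For `d ≥ 3` and a field of characteristic zero, the quadratic forms
`Γ_{a,b}` for `0 ≤ a < b ≤ d-3` are `C(d-2,2)` linearly independent quadratic
forms in `x_0,...,x_d`. -/
theorem gamma_linearIndependent (K : Type*) [Field K] [CharZero K] (d : ℕ) (hd : 3 ≤ d) :
    LinearIndependent K
      (fun q : {ab : ℕ × ℕ // ab.1 < ab.2 ∧ ab.2 ≤ d - 3} => Gamma K q.1.1 q.1.2) ∧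
    Nat.card {ab : ℕ × ℕ // ab.1 < ab.2 ∧ ab.2 ≤ d - 3} = Nat.choose (d - 2) 2 :=
  gamma_linearIndependent_general K d hd
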